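/- arXiv:1801.04363 — 3 statements merged into one kernel-verified Lean document; each statement's English description precedes it below -/
import Mathlib

section
/- With K(x) = -log|tanh(πx/(4d))| and Q(x) = -log w(x) where w satisfies: w ∈ (0,1] on ℝ, Q is continuous, strictly convex, and Q(x) → ∞ as |x| → ∞, the discrete energy I_n^D(a) = Σ_{i≠j} K(a_i - a_j) + (2(n-1)/n) Σ_i Q(a_i) attains a unique minimizer on R_n = {a ∈ ℝⁿ : a_1 < ⋯ < a_n}. -/
private lemma tanh_cont' : Continuous Real.tanh := by
  have h : Real.tanh = fun x => Real.sinh x / Real.cosh x :=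
    funext Real.tanh_eq_sinh_div_cosh
  rw [h]
  exact Real.continuous_sinh.div Real.continuous_cosh fun x => (Real.cosh_pos x).ne'

private lemma abs_tanh_le_one' (x : ℝ) : |Real.tanh x| ≤ 1 := by
  rw [Real.tanh_eq_sinh_div_cosh, abs_div, abs_of_pos (Real.cosh_pos x),
    div_le_one (Real.cosh_pos x)]
  nlinarith [Real.cosh_sq x, abs_nonneg (Real.sinh x), sq_abs (Real.sinh x), Real.cosh_pos x]

private lemma tanh_ne_zero' {x : ℝ} (hx : x ≠ 0) : Real.tanh x ≠ 0 := by
  rw [Real.tanh_eq_sinh_div_cosh]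
  exact div_ne_zero (fun h => hx (Real.sinh_eq_zero.1 h)) (Real.cosh_pos x).ne'

private lemma tanh_pos' {x : ℝ} (hx : 0 < x) : 0 < Real.tanh x := by
  rw [Real.tanh_eq_sinh_div_cosh]
  exact div_pos (Real.sinh_pos_iff.2 hx) (Real.cosh_pos x)

private lemma tanh_mid' (u v : ℝ) :
    Real.tanh u * Real.tanh v ≤ Real.tanh ((u + v) / 2) ^ 2 := by
  have h1 := Real.cosh_add u v
  have h2 := Real.cosh_sub u v
  have h4 : Real.cosh (u + v) = 2 * Real.cosh ((u + v) / 2) ^ 2 - 1 := by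
    have h5 := Real.cosh_add ((u + v) / 2) ((u + v) / 2)
    have h6 := Real.cosh_sq ((u + v) / 2)
    rw [show (u + v) / 2 + (u + v) / 2 = u + v by ring] at h5
    nlinarith [Real.cosh_pos ((u + v) / 2)]
  have h3 := Real.cosh_sq ((u + v) / 2)
  have hB : 1 ≤ Real.cosh (u - v) := Real.one_le_cosh _
  have hcu := Real.cosh_pos u
  have hcv := Real.cosh_pos v
  have hcm := Real.cosh_pos ((u + v) / 2)
  rw [Real.tanh_eq_sinh_div_cosh, Real.tanh_eq_sinh_div_cosh, Real.tanh_eq_sinh_div_cosh,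
    div_mul_div_comm, div_pow, div_le_div_iff₀ (by positivity) (by positivity)]
  nlinarith [Real.one_le_cosh (u + v), sq_nonneg (Real.sinh ((u + v) / 2))]

theorem stmt_6 (n : ℕ) (hn : 2 ≤ n) (d : ℝ) (hd : 0 < d)
    (K Q : ℝ → ℝ)
    (hK : ∀ x : ℝ, K x = - Real.log |Real.tanh (Real.pi * x / (4 * d))|)
    (hQcont : Continuous Q)
    (hQconv : StrictConvexOn ℝ Set.univ Q)
    (hQcoercive : Filter.Tendsto Q (Filter.cocompact ℝ) Filter.atTop)
    (I : (Fin n → ℝ) → ℝ)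
    (hI : ∀ a : Fin n → ℝ,
      I a = (∑ i : Fin n, ∑ j ∈ Finset.univ.erase i, K (a i - a j))
        + (2 * (n - 1) / n) * ∑ i : Fin n, Q (a i)) :
    ∃! a : Fin n → ℝ, StrictMono a ∧ ∀ b : Fin n → ℝ, StrictMono b → I a ≤ I b := by
  classical
  have hn2 : (2:ℝ) ≤ (n:ℝ) := by exact_mod_cast hn
  obtain ⟨q, hq, hIq⟩ : ∃ q : ℝ, 0 < q ∧ ∀ a : Fin n → ℝ,
      I a = (∑ i : Fin n, ∑ j ∈ Finset.univ.erase i, K (a i - a j))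
        + q * ∑ i : Fin n, Q (a i) :=
    ⟨2 * ((n:ℝ) - 1) / n, div_pos (by linarith) (by linarith), hI⟩
  set c := Real.pi / (4 * d) with hc
  have hcpos : 0 < c := div_pos Real.pi_pos (by linarith)
  have hKc : ∀ x : ℝ, K x = - Real.log |Real.tanh (c * x)| := by
    intro x
    rw [hK x]
    congr 2
    rw [hc]; ring
  have hKnonneg : ∀ x : ℝ, 0 ≤ K x := by
    intro x
    rw [hKc, neg_nonneg]
    exact Real.log_nonpos (abs_nonneg _) (abs_tanh_le_one' _)
  have hKeven : ∀ x : ℝ, K (-x) = K x := by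
    intro x
    rw [hKc, hKc, mul_neg, Real.tanh_neg, abs_neg]
  have hKcontAt : ∀ x : ℝ, x ≠ 0 → ContinuousAt K x := by
    intro x hx
    have h1 : Real.tanh (c * x) ≠ 0 := tanh_ne_zero' (mul_ne_zero hcpos.ne' hx)
    have h2 : ContinuousAt (fun y : ℝ => - Real.log |Real.tanh (c * y)|) x := by
      apply ContinuousAt.neg
      apply ContinuousAt.comp (Real.continuousAt_log (by rwa [abs_ne_zero]))
      exact (continuous_abs.comp (tanh_cont'.comp (continuous_const.mul continuous_id))).continuousAt
    have hKfun : K = fun y : ℝ => - Real.log |Real.tanh (c * y)| := funext hKc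
    rw [hKfun]
    exact h2
  -- midpoint convexity of K
  have hKmidpos : ∀ x y : ℝ, 0 < x → 0 < y → K ((x + y) / 2) ≤ (K x + K y) / 2 := by
    intro x y hx hy
    have hu : 0 < Real.tanh (c * x) := tanh_pos' (by positivity)
    have hv : 0 < Real.tanh (c * y) := tanh_pos' (by positivity)
    have hm : 0 < Real.tanh (c * ((x + y) / 2)) := tanh_pos' (by positivity)
    have hmid := tanh_mid' (c * x) (c * y)
    rw [show (c * x + c * y) / 2 = c * ((x + y) / 2) by ring] at hmid
    have hlog : Real.log (Real.tanh (c * x) * Real.tanh (c * y))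
        ≤ Real.log (Real.tanh (c * ((x + y) / 2)) ^ 2) :=
      Real.log_le_log (by positivity) hmid
    rw [Real.log_mul hu.ne' hv.ne', Real.log_pow] at hlog
    rw [hKc, hKc, hKc, abs_of_pos hu, abs_of_pos hv, abs_of_pos hm]
    push_cast at hlog
    linarith
  have hKmid : ∀ x y : ℝ, 0 < x * y → K ((x + y) / 2) ≤ (K x + K y) / 2 := by
    intro x y hxy
    rcases lt_or_gt_of_ne (fun h : x = 0 => by simp [h] at hxy) with hx | hx
    · have hy : y < 0 := by nlinarith
      have := hKmidpos (-x) (-y) (by linarith) (by linarith)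
      rw [show (-x + -y) / 2 = -((x + y) / 2) by ring, hKeven, hKeven, hKeven] at this
      exact this
    · have hy : 0 < y := by nlinarith
      exact hKmidpos x y hx hy
  -- Q minimum
  obtain ⟨x₀, hx₀⟩ := hQcont.exists_forall_le hQcoercive
  set Qm := Q x₀ with hQm
  -- sum bounds
  have hQsum_lb : ∀ a : Fin n → ℝ, (n:ℝ) * Qm ≤ ∑ i, Q (a i) := by
    intro a
    have h := Finset.sum_le_sum (fun i (_ : i ∈ Finset.univ) => hx₀ (a i))
    simpa [Finset.sum_const, Finset.card_univ, nsmul_eq_mul] using h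
  have hQsingle : ∀ (a : Fin n → ℝ) (i : Fin n),
      Q (a i) ≤ (∑ i, Q (a i)) - ((n:ℝ) - 1) * Qm := by
    intro a i
    have h := Finset.single_le_sum (f := fun i' => Q (a i') - Qm)
      (fun i' _ => sub_nonneg.2 (hx₀ (a i'))) (Finset.mem_univ i)
    rw [Finset.sum_sub_distrib] at h
    simp only [Finset.sum_const, Finset.card_univ, Fintype.card_fin, nsmul_eq_mul] at h
    linarith
  have hKsum_nonneg : ∀ a : Fin n → ℝ,
      0 ≤ ∑ i : Fin n, ∑ j ∈ Finset.univ.erase i, K (a i - a j) :=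
    fun a => Finset.sum_nonneg fun i _ => Finset.sum_nonneg fun j _ => hKnonneg _
  have hKsingle : ∀ (a : Fin n → ℝ) (i j : Fin n), j ≠ i →
      K (a i - a j) ≤ ∑ i : Fin n, ∑ j ∈ Finset.univ.erase i, K (a i - a j) := by
    intro a i j hij
    calc K (a i - a j) ≤ ∑ j' ∈ Finset.univ.erase i, K (a i - a j') :=
          Finset.single_le_sum (f := fun j' => K (a i - a j')) (fun j' _ => hKnonneg _)
            (Finset.mem_erase.2 ⟨hij, Finset.mem_univ j⟩)
      _ ≤ _ := Finset.single_le_sum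
            (f := fun i' => ∑ j' ∈ Finset.univ.erase i', K (a i' - a j'))
            (fun i' _ => Finset.sum_nonneg fun j' _ => hKnonneg _) (Finset.mem_univ i)
  -- quantitative separation
  have hdelta : ∀ C : ℝ, ∃ δ > 0, ∀ x : ℝ, x ≠ 0 → K x ≤ C → δ ≤ |x| := by
    intro C
    have hct : ContinuousAt Real.tanh 0 := tanh_cont'.continuousAt
    rw [Metric.continuousAt_iff] at hct
    obtain ⟨δ, hδpos, hδ⟩ := hct (Real.exp (-C)) (Real.exp_pos _)
    refine ⟨δ / c, by positivity, fun x hx hKx => ?_⟩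
    by_contra hlt
    push_neg at hlt
    have h1 : |Real.tanh (c * x)| < Real.exp (-C) := by
      have hd1 : dist (c * x) 0 < δ := by
        rw [Real.dist_eq, sub_zero, abs_mul, abs_of_pos hcpos]
        calc c * |x| < c * (δ / c) := by
              exact mul_lt_mul_of_pos_left hlt hcpos
          _ = δ := by field_simp
      simpa [Real.dist_eq, Real.tanh_zero] using hδ hd1
    have hne : Real.tanh (c * x) ≠ 0 := tanh_ne_zero' (mul_ne_zero hcpos.ne' hx)
    have hpos : 0 < |Real.tanh (c * x)| := abs_pos.2 hne
    have h3 : -C ≤ Real.log |Real.tanh (c * x)| := by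
      have := hKc x ▸ hKx
      linarith [this]
    have h2 : Real.exp (-C) ≤ |Real.tanh (c * x)| :=
      (Real.exp_log hpos) ▸ Real.exp_le_exp.2 h3
    linarith
  -- Q sublevel bound
  have hQbound : ∀ M : ℝ, ∃ r : ℝ, ∀ x : ℝ, Q x ≤ M → |x| ≤ r := by
    intro M
    have h : {x : ℝ | M + 1 ≤ Q x} ∈ Filter.cocompact ℝ :=
      hQcoercive.eventually (Filter.eventually_ge_atTop (M + 1))
    obtain ⟨t, htc, hts⟩ := Filter.mem_cocompact.1 h
    obtain ⟨r, hr⟩ := htc.isBounded.subset_closedBall 0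
    refine ⟨r, fun x hQx => ?_⟩
    by_contra hxr
    push_neg at hxr
    have hx : x ∉ t := by
      intro hx
      have := hr hx
      rw [Metric.mem_closedBall, Real.dist_eq, sub_zero] at this
      linarith
    have := hts hx
    simp only [Set.mem_setOf_eq] at this
    linarith
  -- continuity of I at strict mono points
  have hIcont : ∀ a : Fin n → ℝ, StrictMono a → ContinuousAt I a := by
    intro a ha
    have h : ContinuousAt (fun a : Fin n → ℝ =>
        (∑ i : Fin n, ∑ j ∈ Finset.univ.erase i, K (a i - a j))
          + q * ∑ i : Fin n, Q (a i)) a := by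
      apply ContinuousAt.add
      · apply tendsto_finset_sum
        intro i _
        apply tendsto_finset_sum
        intro j hj
        have hij : j ≠ i := (Finset.mem_erase.1 hj).1
        have hne : a i - a j ≠ 0 := sub_ne_zero.2 (ha.injective.ne (Ne.symm hij))
        have hsub : ContinuousAt (fun b : Fin n → ℝ => b i - b j) a :=
          ContinuousAt.sub (continuous_apply i).continuousAt (continuous_apply j).continuousAt
        have hK1 : ContinuousAt (fun b : Fin n → ℝ => K (b i - b j)) a :=
          ContinuousAt.comp (hKcontAt _ hne) hsub
        exact hK1
      · apply ContinuousAt.mul continuousAt_const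
        apply tendsto_finset_sum
        intro i _
        exact hQcont.continuousAt.comp ((continuous_apply i).continuousAt)
    have hIfun : I = fun a : Fin n → ℝ =>
        (∑ i : Fin n, ∑ j ∈ Finset.univ.erase i, K (a i - a j))
          + q * ∑ i : Fin n, Q (a i) := funext hIq
    rw [hIfun]
    exact h
  -- base point
  have ha₀ : StrictMono (fun i : Fin n => (i.val : ℝ)) := by
    intro i j hij
    have h : i.val < j.val := hij
    show ((i.val : ℝ)) < ((j.val : ℝ))
    exact_mod_cast h
  set a₀ : Fin n → ℝ := fun i => (i.val : ℝ) with ha₀def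
  set C := I a₀ with hC
  set S : Set (Fin n → ℝ) := {a | StrictMono a ∧ I a ≤ C} with hS
  have ha₀S : a₀ ∈ S := ⟨ha₀, le_refl _⟩
  -- single K bound on S
  set C' := C - q * ((n:ℝ) * Qm) with hC'
  have hKbd : ∀ a ∈ S, ∀ i j : Fin n, j ≠ i → K (a i - a j) ≤ C' := by
    intro a haS i j hij
    have h1 := hKsingle a i j hij
    have h2 := hQsum_lb a
    have h3 := hIq a
    have h4 : q * ((n:ℝ) * Qm) ≤ q * ∑ i, Q (a i) := mul_le_mul_of_nonneg_left h2 hq.le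
    have h5 := haS.2
    rw [hC']
    linarith
  obtain ⟨δ, hδpos, hδ⟩ := hdelta C'
  -- coordinate bound on S
  set M := C / q - ((n:ℝ) - 1) * Qm with hM
  have hQcoordbd : ∀ a ∈ S, ∀ i : Fin n, Q (a i) ≤ M := by
    intro a haS i
    have h1 := hQsingle a i
    have h2 : q * ∑ i, Q (a i) ≤ C := by
      have h3 := hIq a
      have h4 := hKsum_nonneg a
      have h5 := haS.2
      linarith
    have h6 : ∑ i, Q (a i) ≤ C / q := by
      rw [le_div_iff₀ hq]
      linarith [mul_comm q (∑ i, Q (a i))]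
    rw [hM]
    linarith
  obtain ⟨r, hr⟩ := hQbound M
  have hSsub : S ⊆ Metric.closedBall (0 : Fin n → ℝ) (max r 0) := by
    intro a haS
    rw [mem_closedBall_zero_iff]
    rw [pi_norm_le_iff_of_nonneg (le_max_right r 0)]
    intro i
    rw [Real.norm_eq_abs]
    exact le_max_of_le_left (hr _ (hQcoordbd a haS i))
  have hSclosed : IsClosed S := by
    apply IsSeqClosed.isClosed
    intro u a hu hua
    have hcoord : ∀ i : Fin n, Filter.Tendsto (fun k => u k i) Filter.atTop (nhds (a i)) :=
      fun i => tendsto_pi_nhds.1 hua i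
    have hmono : StrictMono a := by
      intro i j hij
      have hsep : ∀ k, δ ≤ u k j - u k i := by
        intro k
        have h1 : K (u k j - u k i) ≤ C' := hKbd (u k) (hu k) j i (ne_of_lt hij)
        have h2 : u k j - u k i ≠ 0 := sub_ne_zero.2 (((hu k).1 hij).ne')
        have h3 := hδ _ h2 h1
        rwa [abs_of_pos (sub_pos.2 ((hu k).1 hij))] at h3
      have hlim : Filter.Tendsto (fun k => u k j - u k i) Filter.atTop (nhds (a j - a i)) :=
        (hcoord j).sub (hcoord i)
      have := ge_of_tendsto hlim (Filter.Eventually.of_forall hsep)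
      linarith
    refine ⟨hmono, ?_⟩
    have hIlim : Filter.Tendsto (fun k => I (u k)) Filter.atTop (nhds (I a)) :=
      (hIcont a hmono).tendsto.comp hua
    exact le_of_tendsto hIlim (Filter.Eventually.of_forall fun k => (hu k).2)
  have hScompact : IsCompact S :=
    (isCompact_closedBall _ _).of_isClosed_subset hSclosed hSsub
  obtain ⟨m, hmS, hmin⟩ := hScompact.exists_isMinOn ⟨a₀, ha₀S⟩
    (fun a ha => (hIcont a ha.1).continuousWithinAt)
  have hglobal : ∀ b : Fin n → ℝ, StrictMono b → I m ≤ I b := by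
    intro b hb
    by_cases hbC : I b ≤ C
    · exact hmin ⟨hb, hbC⟩
    · push_neg at hbC
      linarith [hmS.2]
  refine ⟨m, ⟨hmS.1, hglobal⟩, ?_⟩
  rintro y ⟨hy, hymin⟩
  by_contra hne
  have hIy : I y = I m := le_antisymm (hymin m hmS.1) (hglobal y hy)
  set z : Fin n → ℝ := fun i => (y i + m i) / 2 with hz
  have hzmono : StrictMono z := by
    intro i j hij
    have h1 := hy hij
    have h2 := hmS.1 hij
    simp only [hz]
    linarith
  -- K part
  have hKpart : ∀ i j : Fin n, i ≠ j →
      K (z i - z j) ≤ (K (y i - y j) + K (m i - m j)) / 2 := by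
    intro i j hij
    have hsign : 0 < (y i - y j) * (m i - m j) := by
      rcases lt_or_gt_of_ne hij with h | h
      · exact mul_pos_of_neg_of_neg (sub_neg.2 (hy h)) (sub_neg.2 (hmS.1 h))
      · exact mul_pos (sub_pos.2 (hy h)) (sub_pos.2 (hmS.1 h))
    have := hKmid (y i - y j) (m i - m j) hsign
    rw [show (y i - y j + (m i - m j)) / 2 = z i - z j by simp only [hz]; ring] at this
    exact this
  -- Q part (strict)
  obtain ⟨i₀, hi₀⟩ := Function.ne_iff.1 hne
  have hQhalf : ∀ x x' : ℝ, x ≠ x' → Q ((x + x') / 2) < (Q x + Q x') / 2 := by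
    intro x x' hxx
    have := hQconv.2 (Set.mem_univ x) (Set.mem_univ x') hxx
      (by norm_num : (0:ℝ) < 1/2) (by norm_num : (0:ℝ) < 1/2) (by norm_num)
    simp only [smul_eq_mul] at this
    calc Q ((x + x') / 2) = Q (1/2 * x + 1/2 * x') := by ring_nf
      _ < 1/2 * Q x + 1/2 * Q x' := this
      _ = (Q x + Q x') / 2 := by ring
  have hQpart : ∑ i, Q (z i) < ((∑ i, Q (y i)) + ∑ i, Q (m i)) / 2 := by
    rw [← Finset.sum_add_distrib, Finset.sum_div]
    apply Finset.sum_lt_sum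
    · intro i _
      by_cases h : y i = m i
      · have : z i = y i := by simp only [hz, h]; ring
        rw [this, h]
        linarith
      · exact (hQhalf _ _ h).le
    · exact ⟨i₀, Finset.mem_univ i₀, hQhalf _ _ hi₀⟩
  -- combine
  have hKsums : (∑ i : Fin n, ∑ j ∈ Finset.univ.erase i, K (z i - z j))
      ≤ ((∑ i : Fin n, ∑ j ∈ Finset.univ.erase i, K (y i - y j))
        + ∑ i : Fin n, ∑ j ∈ Finset.univ.erase i, K (m i - m j)) / 2 := by
    rw [← Finset.sum_add_distrib, Finset.sum_div]
    apply Finset.sum_le_sum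
    intro i _
    rw [← Finset.sum_add_distrib, Finset.sum_div]
    apply Finset.sum_le_sum
    intro j hj
    exact hKpart i j (Ne.symm (Finset.mem_erase.1 hj).1)
  have hIz : I z < I m := by
    have h1 := hIq z
    have h2 := hIq y
    have h3 := hIq m
    have h4 : q * ∑ i, Q (z i)
        < (q * (∑ i, Q (y i)) + q * (∑ i, Q (m i))) / 2 := by
      calc q * ∑ i, Q (z i) < q * (((∑ i, Q (y i)) + ∑ i, Q (m i)) / 2) :=
            mul_lt_mul_of_pos_left hQpart hq
        _ = (q * (∑ i, Q (y i)) + q * (∑ i, Q (m i))) / 2 := by ring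
    have h5 : I z < (I y + I m) / 2 := by
      rw [h1, h2, h3]
      linarith
    rw [hIy] at h5
    linarith
  exact absurd (hglobal z hzmono) (not_le.2 hIz)
end

section
/- Let a* ∈ R_n be the minimizer of the discrete energy I_n^D. Then for every x ∈ ℝ and every k ∈ {1,…,n}: Σ_{j≠k} K(x - a*_j) + ((n-1)/n)·Q(x) ≥ Σ_{j≠k} K(a*_k - a*_j) + ((n-1)/n)·Q(a*_k). -/
private lemma ereal_coe_sum {ι : Type*} (s : Finset ι) (f : ι → ℝ) :
    ((∑ i ∈ s, f i : ℝ) : EReal) = ∑ i ∈ s, ((f i : ℝ) : EReal) := by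
  induction s using Finset.cons_induction with
  | empty => simp
  | cons a s ha ih => simp [Finset.sum_cons, EReal.coe_add, ih]

private lemma perm_double_sum {n : ℕ} (σ : Equiv.Perm (Fin n)) (F : Fin n → Fin n → ℝ) :
    ∑ i : Fin n, ∑ j ∈ Finset.univ.erase i, F (σ i) (σ j)
      = ∑ i : Fin n, ∑ j ∈ Finset.univ.erase i, F i j := by
  have h1 : ∀ i : Fin n, ∑ j ∈ Finset.univ.erase i, F (σ i) (σ j)
      = ∑ j ∈ Finset.univ.erase (σ i), F (σ i) j := by
    intro i
    have : (Finset.univ.erase (σ i)) = (Finset.univ.erase i).map σ.toEmbedding := by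
      rw [Finset.map_erase]
      congr 1
      simp [Finset.map_univ_equiv]
    rw [this, Finset.sum_map]
    rfl
  simp_rw [h1]
  exact Equiv.sum_comp σ (fun i => ∑ j ∈ Finset.univ.erase i, F i j)

private lemma decomp {n : ℕ} (k : Fin n) (a : Fin n → ℝ) (K : ℝ → ℝ) :
    ∑ i : Fin n, ∑ j ∈ Finset.univ.erase i, K (a i - a j)
      = (∑ j ∈ Finset.univ.erase k, K (a k - a j))
        + ((∑ i ∈ Finset.univ.erase k, K (a i - a k))
        + ∑ i ∈ Finset.univ.erase k, ∑ j ∈ (Finset.univ.erase k).erase i, K (a i - a j)) := by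
  rw [← Finset.add_sum_erase _ _ (Finset.mem_univ k)]
  congr 1
  rw [← Finset.sum_add_distrib]
  apply Finset.sum_congr rfl
  intro i hi
  have hik : i ≠ k := (Finset.mem_erase.mp hi).1
  have hk : k ∈ Finset.univ.erase i := Finset.mem_erase.mpr ⟨hik.symm, Finset.mem_univ k⟩
  rw [← Finset.add_sum_erase _ _ hk, Finset.erase_right_comm]

theorem stmt_7 (n : ℕ) (hn : 2 ≤ n) (d : ℝ) (hd : 0 < d)
    (w : ℝ → ℝ) (hwpos : ∀ x : ℝ, 0 < w x) (hwle : ∀ x : ℝ, w x ≤ 1)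
    (hconc : StrictConcaveOn ℝ Set.univ (fun x => Real.log (w x)))
    (Q : ℝ → ℝ) (hQ : ∀ x : ℝ, Q x = - Real.log (w x))
    (hQcoercive : Filter.Tendsto Q (Filter.cocompact ℝ) Filter.atTop)
    (K : ℝ → ℝ)
    (hK : ∀ x : ℝ, K x = - Real.log |Real.tanh (Real.pi * x / (4 * d))|)
    (Ke : ℝ → EReal)
    (hKe : ∀ x : ℝ, Ke x = if x = 0 then (⊤ : EReal) else ((K x : ℝ) : EReal))
    (I : (Fin n → ℝ) → ℝ)
    (hI : ∀ a : Fin n → ℝ,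
      I a = (∑ i : Fin n, ∑ j ∈ Finset.univ.erase i, K (a i - a j))
        + (2 * (n - 1) / n) * ∑ i : Fin n, Q (a i))
    (astar : Fin n → ℝ) (hmono : StrictMono astar)
    (hmin : ∀ b : Fin n → ℝ, StrictMono b → I astar ≤ I b) :
    ∀ (x : ℝ) (k : Fin n),
      (((∑ j ∈ Finset.univ.erase k, K (astar k - astar j))
          + ((n - 1) / n) * Q (astar k) : ℝ) : EReal)
        ≤ (∑ j ∈ Finset.univ.erase k, Ke (x - astar j))
          + ((((n - 1) / n) * Q x : ℝ) : EReal) := by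
  have hKeven : ∀ y : ℝ, K (-y) = K y := by
    intro y
    rw [hK, hK]
    have : Real.pi * (-y) / (4 * d) = -(Real.pi * y / (4 * d)) := by ring
    rw [this, Real.tanh_neg, abs_neg]
  -- the real inequality
  have hreal : ∀ (x : ℝ) (k : Fin n), (∀ j : Fin n, j ≠ k → x ≠ astar j) →
      (∑ j ∈ Finset.univ.erase k, K (astar k - astar j)) + ((n - 1) / n) * Q (astar k)
        ≤ (∑ j ∈ Finset.univ.erase k, K (x - astar j)) + ((n - 1) / n) * Q x := by
    intro x k hx
    set c := Function.update astar k x with hc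
    have hck : c k = x := Function.update_self k x astar
    have hcj : ∀ j : Fin n, j ≠ k → c j = astar j := fun j hj => Function.update_of_ne hj x astar
    have hcinj : Function.Injective c := by
      intro i j hij
      by_cases hik : i = k <;> by_cases hjk : j = k
      · rw [hik, hjk]
      · subst hik; rw [hck, hcj j hjk] at hij; exact absurd hij (hx j hjk)
      · subst hjk; rw [hck, hcj i hik] at hij; exact absurd hij.symm (hx i hik)
      · rw [hcj i hik, hcj j hjk] at hij; exact hmono.injective hij
    set σ := Tuple.sort c with hσ
    have hb : StrictMono (c ∘ σ) :=
      (Tuple.monotone_sort c).strictMono_of_injective (hcinj.comp σ.injective)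
    have h0 : I astar ≤ I (c ∘ σ) := hmin _ hb
    have hIc : I (c ∘ σ) = I c := by
      rw [hI, hI]
      congr 1
      · exact perm_double_sum σ (fun i j => K (c i - c j))
      · congr 1
        exact Equiv.sum_comp σ (fun i => Q (c i))
    rw [hIc, hI, hI, decomp k astar K, decomp k c K] at h0
    -- identify pieces
    have e1 : ∑ j ∈ Finset.univ.erase k, K (c k - c j)
        = ∑ j ∈ Finset.univ.erase k, K (x - astar j) := by
      apply Finset.sum_congr rfl
      intro j hj
      rw [hck, hcj j (Finset.mem_erase.mp hj).1]
    have e2 : ∑ i ∈ Finset.univ.erase k, K (c i - c k)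
        = ∑ i ∈ Finset.univ.erase k, K (x - astar i) := by
      apply Finset.sum_congr rfl
      intro i hi
      rw [hck, hcj i (Finset.mem_erase.mp hi).1, ← hKeven, neg_sub]
    have e3 : ∑ i ∈ Finset.univ.erase k, ∑ j ∈ (Finset.univ.erase k).erase i, K (c i - c j)
        = ∑ i ∈ Finset.univ.erase k, ∑ j ∈ (Finset.univ.erase k).erase i, K (astar i - astar j) := by
      apply Finset.sum_congr rfl
      intro i hi
      apply Finset.sum_congr rfl
      intro j hj
      rw [hcj i (Finset.mem_erase.mp hi).1,
        hcj j (Finset.mem_erase.mp (Finset.mem_of_mem_erase hj)).1]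
    have e4 : ∑ i ∈ Finset.univ.erase k, K (astar i - astar k)
        = ∑ i ∈ Finset.univ.erase k, K (astar k - astar i) := by
      apply Finset.sum_congr rfl
      intro i _
      rw [← hKeven, neg_sub]
    have e5 : ∑ i : Fin n, Q (c i) = Q x + ∑ i ∈ Finset.univ.erase k, Q (astar i) := by
      rw [← Finset.add_sum_erase _ _ (Finset.mem_univ k), hck]
      congr 1
      apply Finset.sum_congr rfl
      intro i hi
      rw [hcj i (Finset.mem_erase.mp hi).1]
    have e6 : ∑ i : Fin n, Q (astar i) = Q (astar k) + ∑ i ∈ Finset.univ.erase k, Q (astar i) :=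
      (Finset.add_sum_erase _ _ (Finset.mem_univ k)).symm
    rw [e1, e2, e3, e4, e5, e6] at h0
    set A := ∑ j ∈ Finset.univ.erase k, K (x - astar j)
    set A' := ∑ j ∈ Finset.univ.erase k, K (astar k - astar j)
    set C := ∑ i ∈ Finset.univ.erase k, ∑ j ∈ (Finset.univ.erase k).erase i, K (astar i - astar j)
    set S := ∑ i ∈ Finset.univ.erase k, Q (astar i)
    have ht : (2 : ℝ) * (n - 1) / n = 2 * ((n - 1) / n) := by ring
    rw [ht] at h0
    nlinarith [h0]
  -- the EReal conclusion
  intro x k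
  by_cases hx : ∀ j : Fin n, j ∈ Finset.univ.erase k → x ≠ astar j
  · have hsum : ∑ j ∈ Finset.univ.erase k, Ke (x - astar j)
        = ((∑ j ∈ Finset.univ.erase k, K (x - astar j) : ℝ) : EReal) := by
      rw [ereal_coe_sum]
      apply Finset.sum_congr rfl
      intro j hj
      rw [hKe, if_neg (sub_ne_zero.mpr (hx j hj))]
    rw [hsum, ← EReal.coe_add]
    exact EReal.coe_le_coe_iff.mpr
      (hreal x k (fun j hj => hx j (Finset.mem_erase.mpr ⟨hj, Finset.mem_univ j⟩)))
  · push_neg at hx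
    obtain ⟨j, hj, hxj⟩ := hx
    have h1 : Ke (x - astar j) = ⊤ := by
      rw [hKe, if_pos (by rw [hxj, sub_self])]
    have hrest : ((∑ i ∈ (Finset.univ.erase k).erase j, K (x - astar i) : ℝ) : EReal)
        ≤ ∑ i ∈ (Finset.univ.erase k).erase j, Ke (x - astar i) := by
      rw [ereal_coe_sum]
      apply Finset.sum_le_sum
      intro i _
      rw [hKe]
      split_ifs with h
      · exact le_top
      · exact le_refl _
    have hne : (∑ i ∈ (Finset.univ.erase k).erase j, Ke (x - astar i)) ≠ ⊥ :=
      fun h => absurd (h ▸ hrest) (by simp)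
    have hsum : ∑ i ∈ Finset.univ.erase k, Ke (x - astar i) = ⊤ := by
      rw [← Finset.add_sum_erase _ _ hj, h1, EReal.top_add_of_ne_bot hne]
    rw [hsum, EReal.top_add_of_ne_bot (EReal.coe_ne_bot _)]
    exact le_top
end

section
/- Let a* be the minimizer of I_n^D and set F^D(n) = I_n^D(a*) - ((n-1)/n) Σ_i Q(a*_i). Then for every x ∈ ℝ, the discrete potential satisfies U_n^D(a*; x) + Q(x) ≥ F^D(n)/(n-1), where U_n^D(a; x) = Σ_{i=1}^n K(x - a_i). -/
open Finset

/-- Coercion ℝ → EReal as an additive monoid hom. -/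
private def realToEReal : ℝ →+ EReal := ⟨⟨Real.toEReal, EReal.coe_zero⟩, EReal.coe_add⟩

private lemma ereal_sum_ne_bot {ι : Type*} (s : Finset ι) (f : ι → EReal)
    (hb : ∀ i ∈ s, f i ≠ ⊥) : ∑ i ∈ s, f i ≠ ⊥ := by
  classical
  revert hb
  induction s using Finset.induction with
  | empty => intro _; simp
  | @insert a t hat ih =>
    intro hb
    rw [Finset.sum_insert hat]
    intro h
    rcases EReal.add_eq_bot_iff.mp h with h1 | h2
    · exact hb a (Finset.mem_insert_self a t) h1
    · exact ih (fun i hi => hb i (Finset.mem_insert_of_mem hi)) h2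

private lemma ereal_sum_eq_top {ι : Type*} (s : Finset ι) (f : ι → EReal)
    (hb : ∀ i ∈ s, f i ≠ ⊥) (i0 : ι) (hi0 : i0 ∈ s) (htop : f i0 = ⊤) :
    ∑ i ∈ s, f i = ⊤ := by
  classical
  rw [← Finset.add_sum_erase s f hi0, htop]
  exact EReal.top_add_of_ne_bot
    (ereal_sum_ne_bot _ _ (fun i hi => hb i (Finset.mem_of_mem_erase hi)))

theorem stmt_8 (n : ℕ) (hn : 2 ≤ n) (d : ℝ) (hd : 0 < d)
    (w : ℝ → ℝ) (hwpos : ∀ x : ℝ, 0 < w x) (hwle : ∀ x : ℝ, w x ≤ 1)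
    (hconc : StrictConcaveOn ℝ Set.univ (fun x => Real.log (w x)))
    (Q : ℝ → ℝ) (hQ : ∀ x : ℝ, Q x = - Real.log (w x))
    (hQcoercive : Filter.Tendsto Q (Filter.cocompact ℝ) Filter.atTop)
    (K : ℝ → ℝ)
    (hK : ∀ x : ℝ, K x = - Real.log |Real.tanh (Real.pi * x / (4 * d))|)
    (Ke : ℝ → EReal)
    (hKe : ∀ x : ℝ, Ke x = if x = 0 then (⊤ : EReal) else ((K x : ℝ) : EReal))
    (I : (Fin n → ℝ) → ℝ)
    (hI : ∀ a : Fin n → ℝ,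
      I a = (∑ i : Fin n, ∑ j ∈ Finset.univ.erase i, K (a i - a j))
        + (2 * (n - 1) / n) * ∑ i : Fin n, Q (a i))
    (astar : Fin n → ℝ) (hmono : StrictMono astar)
    (hmin : ∀ b : Fin n → ℝ, StrictMono b → I astar ≤ I b)
    (F : ℝ)
    (hF : F = I astar - ((n - 1) / n) * ∑ i : Fin n, Q (astar i)) :
    ∀ x : ℝ,
      ((F / (n - 1) : ℝ) : EReal)
        ≤ (∑ i : Fin n, Ke (x - astar i)) + ((Q x : ℝ) : EReal) := by
  intro x
  classical
  by_cases hx : ∃ i, x = astar i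
  · -- the sum is ⊤, so the inequality is trivial
    obtain ⟨i0, hi0⟩ := hx
    have hb : ∀ i ∈ (univ : Finset (Fin n)), Ke (x - astar i) ≠ ⊥ := by
      intro i _
      rw [hKe]
      split <;> simp
    have htop : Ke (x - astar i0) = ⊤ := by
      rw [hKe, if_pos (by rw [hi0, sub_self])]
    have hsum : ∑ i : Fin n, Ke (x - astar i) = ⊤ :=
      ereal_sum_eq_top univ _ hb i0 (mem_univ i0) htop
    rw [hsum, EReal.top_add_of_ne_bot (EReal.coe_ne_bot _)]
    exact le_top
  · push_neg at hx
    have hxne : ∀ i, x - astar i ≠ 0 := fun i => sub_ne_zero.mpr (hx i)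
    -- K is even
    have hKeven : ∀ y : ℝ, K (-y) = K y := by
      intro y
      rw [hK, hK]
      rw [show Real.pi * -y / (4 * d) = -(Real.pi * y / (4 * d)) by ring,
        Real.tanh_neg, abs_neg]
    have hKsub : ∀ u v : ℝ, K (u - v) = K (v - u) := by
      intro u v
      have := hKeven (v - u)
      rwa [neg_sub] at this
    -- I is symmetric under permutations
    have hIsymm : ∀ (b : Fin n → ℝ) (σ : Equiv.Perm (Fin n)), I (b ∘ σ) = I b := by
      intro b σ
      rw [hI, hI]
      simp only [Function.comp_apply]
      congr 1
      · have hinner : ∀ i : Fin n,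
            ∑ j ∈ univ.erase i, K (b (σ i) - b (σ j))
              = ∑ j ∈ univ.erase (σ i), K (b (σ i) - b j) := by
          intro i
          apply Finset.sum_equiv σ
          · intro j; simp [σ.injective.eq_iff]
          · intro j _; rfl
        calc ∑ i : Fin n, ∑ j ∈ univ.erase i, K (b (σ i) - b (σ j))
            = ∑ i : Fin n, ∑ j ∈ univ.erase (σ i), K (b (σ i) - b j) :=
              Finset.sum_congr rfl fun i _ => hinner i
          _ = ∑ i : Fin n, ∑ j ∈ univ.erase i, K (b i - b j) :=
              Equiv.sum_comp σ (fun i => ∑ j ∈ univ.erase i, K (b i - b j))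
      · congr 1
        exact Equiv.sum_comp σ (fun i => Q (b i))
    set U : ℝ := ∑ j : Fin n, K (x - astar j) with hU
    set Qs : ℝ := ∑ i : Fin n, Q (astar i) with hQs
    -- per-index inequality from minimality
    have hper : ∀ i : Fin n,
        ∑ j ∈ univ.erase i, K (astar i - astar j)
          ≤ (∑ j ∈ univ.erase i, K (x - astar j))
            + (((n : ℝ) - 1) / n) * (Q x - Q (astar i)) := by
      intro i
      set b : Fin n → ℝ := Function.update astar i x with hbdef
      have hbi : b i = x := Function.update_self i x astar
      have hbj : ∀ j : Fin n, j ≠ i → b j = astar j := fun j hj =>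
        Function.update_of_ne hj x astar
      have hbinj : Function.Injective b := by
        intro j k hjk
        rcases eq_or_ne j i with hji | hji
        · rcases eq_or_ne k i with hki | hki
          · rw [hji, hki]
          · exfalso
            rw [hji, hbi, hbj k hki] at hjk
            exact hx k hjk
        · rcases eq_or_ne k i with hki | hki
          · exfalso
            rw [hki, hbi, hbj j hji] at hjk
            exact hx j hjk.symm
          · rw [hbj j hji, hbj k hki] at hjk
            exact hmono.injective hjk
      -- I astar ≤ I b via sorting
      have hIab : I astar ≤ I b := by
        have hs : StrictMono (b ∘ Tuple.sort b) :=
          (Tuple.monotone_sort b).strictMono_of_injective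
            (hbinj.comp (Tuple.sort b).injective)
        calc I astar ≤ I (b ∘ Tuple.sort b) := hmin _ hs
          _ = I b := hIsymm b (Tuple.sort b)
      have hie : i ∈ (univ : Finset (Fin n)) := mem_univ i
      -- double sum expansion, generic in the configuration
      have hexp : ∀ c : Fin n → ℝ,
          (∀ j : Fin n, j ≠ i → c j = astar j) →
          ∑ k : Fin n, ∑ j ∈ univ.erase k, K (c k - c j)
            = (∑ j ∈ univ.erase i, K (c i - astar j))
              + ((∑ k ∈ univ.erase i, K (c i - astar k))
                + ∑ k ∈ univ.erase i,
                    ∑ j ∈ (univ.erase i).erase k, K (astar k - astar j)) := by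
        intro c hcj
        rw [← Finset.add_sum_erase _ _ hie]
        congr 1
        · exact Finset.sum_congr rfl fun j hj => by
            rw [hcj j (Finset.ne_of_mem_erase hj)]
        · rw [← Finset.sum_add_distrib]
          apply Finset.sum_congr rfl
          intro k hk
          have hki : k ≠ i := Finset.ne_of_mem_erase hk
          have hiek : i ∈ (univ : Finset (Fin n)).erase k :=
            Finset.mem_erase.mpr ⟨hki.symm, mem_univ i⟩
          rw [← Finset.add_sum_erase _ _ hiek, Finset.erase_right_comm]
          have h1 : K (c k - c i) = K (c i - astar k) := by
            rw [hcj k hki, hKsub]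
          rw [h1]
          congr 1
          apply Finset.sum_congr rfl
          intro j hj
          rw [hcj k hki,
            hcj j (Finset.ne_of_mem_erase (Finset.mem_of_mem_erase hj))]
      have hDb := hexp b hbj
      have hDa := hexp astar (fun j _ => rfl)
      rw [hbi] at hDb
      -- Q-sums
      have hQb : ∑ j : Fin n, Q (b j)
          = Q x + ∑ j ∈ univ.erase i, Q (astar j) := by
        rw [← Finset.add_sum_erase _ _ hie, hbi]
        congr 1
        exact Finset.sum_congr rfl fun j hj => by rw [hbj j (Finset.ne_of_mem_erase hj)]
      have hQa : ∑ j : Fin n, Q (astar j)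
          = Q (astar i) + ∑ j ∈ univ.erase i, Q (astar j) :=
        (Finset.add_sum_erase _ _ hie).symm
      have heq : I b = I astar
          + (2 * ((∑ j ∈ univ.erase i, K (x - astar j))
              - (∑ j ∈ univ.erase i, K (astar i - astar j)))
            + 2 * ((((n : ℝ) - 1) / n) * (Q x - Q (astar i)))) := by
        rw [hI b, hI astar, hDb, hDa, hQb, hQa]
        ring
      rw [heq] at hIab
      linarith
    -- sum the per-index inequalities over i
    have hsum1 : ∑ i : Fin n, ∑ j ∈ univ.erase i, K (x - astar j)
        = ((n : ℝ) - 1) * U := by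
      have h1 : ∀ i : Fin n,
          ∑ j ∈ univ.erase i, K (x - astar j) = U - K (x - astar i) := by
        intro i
        rw [Finset.sum_erase_eq_sub (mem_univ i), ← hU]
      rw [Finset.sum_congr rfl fun i _ => h1 i, Finset.sum_sub_distrib,
        Finset.sum_const, ← hU]
      simp only [card_univ, Fintype.card_fin, nsmul_eq_mul]
      ring
    have hn1 : (1 : ℝ) ≤ (n : ℝ) - 1 := by
      have : (2 : ℝ) ≤ (n : ℝ) := by exact_mod_cast hn
      linarith
    have hnpos : (0 : ℝ) < (n : ℝ) := by linarith
    have hne0 : (n : ℝ) ≠ 0 := ne_of_gt hnpos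
    have hS : ∑ i : Fin n, ∑ j ∈ univ.erase i, K (astar i - astar j)
        ≤ ((n : ℝ) - 1) * U
          + (((n : ℝ) - 1) * Q x - (((n : ℝ) - 1) / n) * Qs) := by
      calc ∑ i : Fin n, ∑ j ∈ univ.erase i, K (astar i - astar j)
          ≤ ∑ i : Fin n, ((∑ j ∈ univ.erase i, K (x - astar j))
              + (((n : ℝ) - 1) / n) * (Q x - Q (astar i))) :=
            Finset.sum_le_sum fun i _ => hper i
        _ = ((n : ℝ) - 1) * U
              + (((n : ℝ) - 1) / n) * ((n : ℝ) * Q x - Qs) := by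
            rw [Finset.sum_add_distrib, hsum1, ← Finset.mul_sum,
              Finset.sum_sub_distrib, Finset.sum_const, ← hQs]
            simp only [card_univ, Fintype.card_fin, nsmul_eq_mul]
        _ = ((n : ℝ) - 1) * U
              + (((n : ℝ) - 1) * Q x - (((n : ℝ) - 1) / n) * Qs) := by
            field_simp
    -- the real inequality
    have hreal : F / ((n : ℝ) - 1) ≤ U + Q x := by
      rw [div_le_iff₀ (by linarith : (0 : ℝ) < (n : ℝ) - 1)]
      rw [hF, hI astar, ← hQs]
      calc (∑ i : Fin n, ∑ j ∈ univ.erase i, K (astar i - astar j))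
            + 2 * ((n : ℝ) - 1) / n * Qs - ((n : ℝ) - 1) / n * Qs
          ≤ (((n : ℝ) - 1) * U + (((n : ℝ) - 1) * Q x - (((n : ℝ) - 1) / n) * Qs))
            + 2 * ((n : ℝ) - 1) / n * Qs - ((n : ℝ) - 1) / n * Qs := by linarith [hS]
        _ = (U + Q x) * ((n : ℝ) - 1) := by field_simp; ring
    -- transfer to EReal
    have hKe' : ∀ i : Fin n, Ke (x - astar i) = ((K (x - astar i) : ℝ) : EReal) :=
      fun i => by rw [hKe, if_neg (hxne i)]
    rw [Finset.sum_congr rfl fun i (_ : i ∈ univ) => hKe' i]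
    have hcoesum : (∑ i : Fin n, ((K (x - astar i) : ℝ) : EReal)) = ((U : ℝ) : EReal) := by
      rw [hU]
      exact (map_sum realToEReal (fun i => K (x - astar i)) univ).symm
    rw [hcoesum, ← EReal.coe_add]
    exact EReal.coe_le_coe_iff.mpr hreal
end
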